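/- arXiv:1906.01487 — 4 statements merged into one kernel-verified Lean document; each statement's English description precedes it below -/
import Mathlib

section
/- Let a, b, c ∈ [0, π] and B̂ ∈ [0, π/2] satisfy the spherical law of cosines cos b = cos c cos a + sin c sin a cos B̂, with a, b, c sufficiently small (all at most some universal ρ > 0). Then |c − a·cos B̂| ≤ b. -/
open Real

lemma sin_smul_ge (a l : ℝ) (ha : 0 ≤ a) (ha' : a ≤ π) (hl : 0 ≤ l) (hl' : l ≤ 1) :
    l * Real.sin a ≤ Real.sin (l * a) := by
  have hc := strictConcaveOn_sin_Icc.concaveOn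
  have h := hc.2 (Set.left_mem_Icc.2 Real.pi_nonneg) (Set.mem_Icc.2 ⟨ha, ha'⟩)
    (show (0:ℝ) ≤ 1 - l by linarith) hl (by ring)
  simpa using h

theorem spherical_projection_inequality :
    ∃ ρ : ℝ, 0 < ρ ∧ ∀ a b c B : ℝ,
      a ∈ Set.Icc 0 π → b ∈ Set.Icc 0 π → c ∈ Set.Icc 0 π →
      B ∈ Set.Icc 0 (π / 2) →
      a ≤ ρ → b ≤ ρ → c ≤ ρ →
      Real.cos b = Real.cos c * Real.cos a + Real.sin c * Real.sin a * Real.cos B →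
      |c - a * Real.cos B| ≤ b := by
  refine ⟨1, one_pos, ?_⟩
  intro a b c B ha hb hc hB haρ hbρ hcρ hlaw
  have hπ : (1:ℝ) ≤ π := by linarith [Real.pi_gt_three]
  have hcosB0 : 0 ≤ Real.cos B := Real.cos_nonneg_of_mem_Icc ⟨by linarith [hB.1, Real.pi_nonneg], hB.2⟩
  have hcosB1 : Real.cos B ≤ 1 := Real.cos_le_one B
  set t := a * Real.cos B with ht
  have ht0 : 0 ≤ t := mul_nonneg ha.1 hcosB0
  have hta : t ≤ a := by nlinarith [ha.1]
  have ht1 : t ≤ 1 := hta.trans haρ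
  -- key: cos b ≤ cos (c - t)
  have hsint : Real.sin a * Real.cos B ≤ Real.sin t := by
    have := sin_smul_ge a (Real.cos B) ha.1 ha.2 hcosB0 hcosB1
    rw [ht, mul_comm a (Real.cos B)]; linarith [this]
  have hcost : Real.cos a ≤ Real.cos t :=
    Real.cos_le_cos_of_nonneg_of_le_pi ht0 ha.2 hta
  have hcosc : 0 ≤ Real.cos c := Real.cos_nonneg_of_mem_Icc ⟨by linarith [hc.1], by linarith [Real.pi_gt_three]⟩
  have hsinc : 0 ≤ Real.sin c := Real.sin_nonneg_of_mem_Icc ⟨hc.1, hc.2⟩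
  have hkey : Real.cos b ≤ Real.cos (c - t) := by
    rw [Real.cos_sub, hlaw]
    have h1 : Real.cos c * Real.cos a ≤ Real.cos c * Real.cos t :=
      mul_le_mul_of_nonneg_left hcost hcosc
    have h2 : Real.sin c * (Real.sin a * Real.cos B) ≤ Real.sin c * Real.sin t :=
      mul_le_mul_of_nonneg_left hsint hsinc
    nlinarith [h1, h2]
  have habs0 : 0 ≤ |c - t| := abs_nonneg _
  have habsπ : |c - t| ≤ π := by
    rw [abs_le]; constructor <;> nlinarith [hc.1, hcρ]
  by_contra hcon
  push_neg at hcon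
  have := Real.strictAntiOn_cos ⟨hb.1, hb.2⟩ ⟨habs0, habsπ⟩ hcon
  rw [Real.cos_abs] at this
  linarith
end

section
/- Let d ≥ 2, let 0 < a ≤ τ ≤ b < ∞, and let u*, u₀, M̃u₀ : [a,b] → [0,∞) be Lipschitz functions with u₀ ≤ u* ≤ M̃u₀ pointwise, u*(a) = u₀(a), u*(b) = u₀(b), such that u* is non-increasing on [a, τ] and non-decreasing on [τ, b]. Then ∫_a^b |(u*)'(r)| r^(d−1) dr ≤ ∫_a^b |u₀'(r)| r^(d−1) dr + (d−1) ∫_a^τ M̃u₀(r) r^(d−2) dr. -/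
open MeasureTheory Set intervalIntegral

open Filter

lemma monotone_integral_deriv_le {g : ℝ → ℝ} (hg : Monotone g) (hc : Continuous g)
    {a b : ℝ} (hab : a ≤ b) : ∫ x in a..b, deriv g x ≤ g b - g a := by
  set μ := hg.stieltjesFunction.measure with hμ
  have hr : ∀ x, hg.stieltjesFunction x = g x := fun x => by
    rw [hg.stieltjesFunction_eq]
    exact rightLim_eq_of_tendsto
      (hc.continuousAt.tendsto.mono_left nhdsWithin_le_nhds)
  have hae : ∀ᵐ x, deriv g x = (μ.rnDeriv volume x).toReal := by
    filter_upwards [hg.ae_hasDerivAt] with x hx using hx.deriv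
  have hIoc : μ (Ioc a b) = ENNReal.ofReal (g b - g a) := by
    rw [StieltjesFunction.measure_Ioc, hr, hr]
  have hfin : μ (Ioc a b) ≠ ⊤ := by rw [hIoc]; exact ENNReal.ofReal_ne_top
  rw [intervalIntegral.integral_of_le hab]
  calc ∫ x in Ioc a b, deriv g x = ∫ x in Ioc a b, (μ.rnDeriv volume x).toReal :=
        integral_congr_ae (ae_restrict_of_ae hae)
    _ = (∫⁻ x in Ioc a b, μ.rnDeriv volume x).toReal := by
        refine integral_toReal (μ.measurable_rnDeriv volume).aemeasurable ?_
        exact ae_restrict_of_ae (Measure.rnDeriv_lt_top μ volume)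
    _ ≤ (μ (Ioc a b)).toReal :=
        ENNReal.toReal_mono hfin (Measure.setLIntegral_rnDeriv_le _)
    _ = g b - g a := by
        rw [hIoc, ENNReal.toReal_ofReal (by linarith [hg hab])]

lemma abs_deriv_le_of_lipschitzOn {f : ℝ → ℝ} {K : NNReal} {s : Set ℝ} {x : ℝ}
    (hs : s ∈ nhds x) (hf : LipschitzOnWith K f s) : |deriv f x| ≤ K := by
  have h1 : deriv f x = fderiv ℝ f x 1 := rfl
  calc |deriv f x| = ‖fderiv ℝ f x 1‖ := by rw [h1]; rfl
    _ ≤ ‖fderiv ℝ f x‖ * ‖(1:ℝ)‖ := (fderiv ℝ f x).le_opNorm 1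
    _ ≤ K := by rw [norm_one, mul_one]; exact norm_fderiv_le_of_lipschitzOn ℝ hs hf

lemma lipschitz_integral_deriv {f : ℝ → ℝ} {K : NNReal} (hf : LipschitzWith K f)
    {a b : ℝ} (hab : a ≤ b) : ∫ x in a..b, deriv f x = f b - f a := by
  have hbd : ∀ x, |deriv f x| ≤ K := fun x =>
    abs_deriv_le_of_lipschitzOn univ_mem (lipschitzOnWith_univ.2 hf)
  have hmeas : Measurable (deriv f) := measurable_deriv f
  have hint : IntervalIntegrable (deriv f) volume a b := by
    refine (_root_.intervalIntegrable_const (c := (K:ℝ))).mono_fun hmeas.aestronglyMeasurable ?_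
    refine ae_of_all _ fun x => ?_
    simpa [Real.norm_eq_abs, abs_of_nonneg K.coe_nonneg] using hbd x
  have hdiff : ∀ᵐ x : ℝ, DifferentiableAt ℝ f x := hf.ae_differentiableAt
  have hK : ∀ x y : ℝ, x ≤ y → |f x - f y| ≤ K * (y - x) := by
    intro x y hxy
    have := hf.dist_le_mul x y
    rw [Real.dist_eq, Real.dist_eq, abs_sub_comm x y,
      abs_of_nonneg (show (0:ℝ) ≤ y - x by linarith)] at this
    exact this
  -- upper bound via g₁ = f + Kx
  have h1 : ∫ x in a..b, deriv f x ≤ f b - f a := by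
    set g : ℝ → ℝ := fun x => f x + K * x with hg
    have hm : Monotone g := by
      intro x y hxy
      have := (abs_le.1 (hK x y hxy)).2
      simp only [hg]; nlinarith
    have hc : Continuous g := hf.continuous.add (continuous_const.mul continuous_id)
    have hae : ∀ᵐ x, deriv g x = deriv f x + K := by
      filter_upwards [hdiff] with x hx
      exact (hx.hasDerivAt.add ((hasDerivAt_id x).const_mul (K:ℝ))).deriv.trans (by ring)
    have hle := monotone_integral_deriv_le hm hc hab
    rw [intervalIntegral.integral_congr_ae (by filter_upwards [hae] with x hx _ using hx),
      intervalIntegral.integral_add hint (_root_.intervalIntegrable_const),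
      intervalIntegral.integral_const, smul_eq_mul] at hle
    simp only [hg] at hle
    linarith
  -- lower bound via g₂ = Kx - f
  have h2 : f b - f a ≤ ∫ x in a..b, deriv f x := by
    set g : ℝ → ℝ := fun x => K * x - f x with hg
    have hm : Monotone g := by
      intro x y hxy
      have := (abs_le.1 (hK x y hxy)).1
      simp only [hg]; nlinarith
    have hc : Continuous g := (continuous_const.mul continuous_id).sub hf.continuous
    have hae : ∀ᵐ x, deriv g x = (K:ℝ) - deriv f x := by
      filter_upwards [hdiff] with x hx
      exact (((hasDerivAt_id x).const_mul (K:ℝ)).sub hx.hasDerivAt).deriv.trans (by ring)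
    have hle := monotone_integral_deriv_le hm hc hab
    rw [intervalIntegral.integral_congr_ae (by filter_upwards [hae] with x hx _ using hx),
      intervalIntegral.integral_sub (_root_.intervalIntegrable_const) hint,
      intervalIntegral.integral_const, smul_eq_mul] at hle
    simp only [hg] at hle
    linarith
  linarith

/-- derivative nonpositive at interior points for antitone functions -/
lemma deriv_nonpos_of_antitoneOn {u : ℝ → ℝ} {a b x : ℝ} (hu : AntitoneOn u (Icc a b))
    (hx : x ∈ Ioo a b) : deriv u x ≤ 0 := by
  by_cases hd : DifferentiableAt ℝ u x
  · have ht : Filter.Tendsto (slope u x) (nhdsWithin x (Ioi x)) (nhds (deriv u x)) :=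
      (hasDerivAt_iff_tendsto_slope.1 hd.hasDerivAt).mono_left
        (nhdsWithin_mono x fun y hy => ne_of_gt hy)
    refine le_of_tendsto ht ?_
    filter_upwards [Ioo_mem_nhdsGT_of_mem ⟨le_refl x, hx.2⟩] with y hy
    have h1 : u y ≤ u x := hu ⟨hx.1.le, hx.2.le⟩ ⟨(hx.1.trans hy.1).le, hy.2.le⟩ hy.1.le
    have h2 : 0 < y - x := by linarith [hy.1]
    rw [slope_def_field]
    exact div_nonpos_of_nonpos_of_nonneg (by linarith) h2.le
  · rw [deriv_zero_of_not_differentiableAt hd]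

lemma deriv_nonneg_of_monotoneOn {u : ℝ → ℝ} {a b x : ℝ} (hu : MonotoneOn u (Icc a b))
    (hx : x ∈ Ioo a b) : 0 ≤ deriv u x := by
  have h := deriv_nonpos_of_antitoneOn (u := fun y => -u y) (a := a) (b := b)
    (fun y hy z hz hyz => neg_le_neg (hu hy hz hyz)) hx
  by_cases hd : DifferentiableAt ℝ u x
  · rw [deriv.fun_neg] at h; linarith
  · rw [deriv_zero_of_not_differentiableAt hd]

/-- a.e. differentiability on the interior for LipschitzOnWith on Icc -/
lemma ae_differentiableAt_Ioo {u : ℝ → ℝ} {K : NNReal} {a b : ℝ}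
    (hu : LipschitzOnWith K u (Icc a b)) :
    ∀ᵐ x : ℝ, x ∈ Ioo a b → DifferentiableAt ℝ u x := by
  obtain ⟨g, hg, hfg⟩ := hu.extend_real
  filter_upwards [hg.ae_differentiableAt] with x hx hxm
  have heq : u =ᶠ[nhds x] g := Filter.eventually_of_mem (Icc_mem_nhds hxm.1 hxm.2) hfg
  exact (Filter.EventuallyEq.differentiableAt_iff heq).2 hx

lemma intervalIntegral_congr_Ioo {f g : ℝ → ℝ} {a b : ℝ} (hab : a ≤ b)
    (h : ∀ᵐ x : ℝ, x ∈ Ioo a b → f x = g x) :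
    ∫ x in a..b, f x = ∫ x in a..b, g x := by
  refine intervalIntegral.integral_congr_ae ?_
  have hb : ∀ᵐ x : ℝ, x ≠ b := by
    refine compl_mem_ae_iff.2 ?_
    exact measure_singleton (b : ℝ)
  filter_upwards [h, hb] with x hx hxb hmem
  rw [uIoc_of_le hab] at hmem
  exact hx ⟨hmem.1, lt_of_le_of_ne hmem.2 hxb⟩

/-- FTC for functions Lipschitz on an interval. -/
lemma lipschitzOn_integral_deriv {f : ℝ → ℝ} {K : NNReal} {a b : ℝ} (hab : a ≤ b)
    (hf : LipschitzOnWith K f (Icc a b)) : ∫ x in a..b, deriv f x = f b - f a := by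
  obtain ⟨g, hg, hfg⟩ := hf.extend_real
  have heq : ∀ᵐ x : ℝ, x ∈ Ioo a b → deriv f x = deriv g x := by
    refine ae_of_all _ fun x hx => ?_
    exact Filter.EventuallyEq.deriv_eq
      (Filter.eventually_of_mem (Icc_mem_nhds hx.1 hx.2) hfg)
  rw [intervalIntegral_congr_Ioo hab heq, lipschitz_integral_deriv hg hab,
    hfg (right_mem_Icc.2 hab), hfg (left_mem_Icc.2 hab)]

/-- Interval integrability of (bounded measurable) * (continuous-on). -/
lemma intervalIntegrable_mul_of_bound {g φ : ℝ → ℝ} {a b : ℝ} (hab : a ≤ b)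
    (hg : Measurable g) (C : ℝ) (hbd : ∀ x ∈ Ioo a b, |g x| ≤ C)
    (hφ : ContinuousOn φ (Icc a b)) :
    IntervalIntegrable (fun x => g x * φ x) volume a b := by
  obtain ⟨D, hD⟩ := (isCompact_Icc (a := a) (b := b)).exists_bound_of_continuousOn hφ
  have hmeas : AEStronglyMeasurable (fun x => g x * φ x)
      (volume.restrict (Set.uIoc a b)) := by
    refine (hg.aestronglyMeasurable.restrict).mul ?_
    refine (hφ.mono ?_).aestronglyMeasurable measurableSet_uIoc
    rw [uIoc_of_le hab]; exact Ioc_subset_Icc_self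
  refine (_root_.intervalIntegrable_const (c := C * D)).mono_fun hmeas ?_
  have hb : ∀ᵐ x : ℝ, x ≠ b := by
    refine compl_mem_ae_iff.2 ?_; exact measure_singleton (b : ℝ)
  refine (ae_restrict_iff' measurableSet_uIoc).2 ?_
  filter_upwards [hb] with x hxb hmem
  rw [uIoc_of_le hab] at hmem
  have hxI : x ∈ Ioo a b := ⟨hmem.1, lt_of_le_of_ne hmem.2 hxb⟩
  have h1 := hbd x hxI
  have h2 := hD x ⟨hxI.1.le, hxI.2.le⟩
  simp only [Real.norm_eq_abs] at *
  rw [abs_mul]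
  have h0 : (0:ℝ) ≤ |g x| := abs_nonneg (g x)
  have h0' : (0:ℝ) ≤ |φ x| := abs_nonneg (φ x)
  have : |g x| * |φ x| ≤ C * D := by nlinarith
  exact this.trans (le_abs_self _)

lemma exists_lipschitzOnWith_mul {f g : ℝ → ℝ} {a b : ℝ}
    (hf : ∃ K : NNReal, LipschitzOnWith K f (Icc a b))
    (hg : ∃ K : NNReal, LipschitzOnWith K g (Icc a b)) :
    ∃ K : NNReal, LipschitzOnWith K (fun x => f x * g x) (Icc a b) := by
  obtain ⟨Kf, hKf⟩ := hf
  obtain ⟨Kg, hKg⟩ := hg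
  obtain ⟨Cf, hCf⟩ := (isCompact_Icc (a := a) (b := b)).exists_bound_of_continuousOn
    hKf.continuousOn
  obtain ⟨Cg, hCg⟩ := (isCompact_Icc (a := a) (b := b)).exists_bound_of_continuousOn
    hKg.continuousOn
  refine ⟨_, LipschitzOnWith.of_dist_le' (K := Cf * Kg + Cg * Kf) fun x hx y hy => ?_⟩
  have h2 := hKf.dist_le_mul x hx y hy
  have h3 := hKg.dist_le_mul x hx y hy
  have h4 := hCf x hx
  have h5 := hCg y hy
  simp only [Real.norm_eq_abs] at h4 h5
  have habs : (0:ℝ) ≤ |f x| := abs_nonneg _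
  have habs2 : (0:ℝ) ≤ |g y| := abs_nonneg _
  calc dist (f x * g x) (f y * g y)
      ≤ |f x| * dist (g x) (g y) + |g y| * dist (f x) (f y) := by
        rw [Real.dist_eq, Real.dist_eq, Real.dist_eq]
        calc |f x * g x - f y * g y| = |f x * (g x - g y) + g y * (f x - f y)| := by ring_nf
          _ ≤ |f x * (g x - g y)| + |g y * (f x - f y)| := abs_add_le _ _
          _ = |f x| * |g x - g y| + |g y| * |f x - f y| := by rw [abs_mul, abs_mul]
    _ ≤ Cf * (Kg * dist x y) + Cg * (Kf * dist x y) :=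
        add_le_add (mul_le_mul h4 h3 dist_nonneg (habs.trans h4))
          (mul_le_mul h5 h2 dist_nonneg (habs2.trans h5))
    _ = (Cf * Kg + Cg * Kf) * dist x y := by ring

lemma exists_lipschitzOnWith_pow {a b : ℝ} (e : ℕ) :
    ∃ K : NNReal, LipschitzOnWith K (fun x : ℝ => x ^ e) (Icc a b) := by
  induction e with
  | zero =>
      refine ⟨(0:ℝ).toNNReal, LipschitzOnWith.of_dist_le' (K := 0) fun x hx y hy => ?_⟩
      simp
  | succ n ih =>
      have hid : ∃ K : NNReal, LipschitzOnWith K (fun x : ℝ => x) (Icc a b) :=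
        ⟨1, by exact LipschitzWith.id.lipschitzOnWith (s := Icc a b)⟩
      obtain ⟨K, hK⟩ := exists_lipschitzOnWith_mul ih hid
      exact ⟨K, by simpa [pow_succ] using hK⟩

/-- Integration by parts for a Lipschitz function against x^e. -/
lemma ibp_lipschitz {u : ℝ → ℝ} {K : NNReal} {a b : ℝ} (hab : a ≤ b) (e : ℕ)
    (hu : LipschitzOnWith K u (Icc a b)) :
    ∫ x in a..b, deriv u x * x ^ e =
      u b * b ^ e - u a * a ^ e - (e : ℝ) * ∫ x in a..b, u x * x ^ (e - 1) := by
  set F : ℝ → ℝ := fun x => u x * x ^ e with hF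
  obtain ⟨K', hF'⟩ := exists_lipschitzOnWith_mul ⟨K, hu⟩ (exists_lipschitzOnWith_pow e)
  have hFTC : ∫ x in a..b, deriv F x = F b - F a := lipschitzOn_integral_deriv hab hF'
  have hI1 : IntervalIntegrable (fun x => deriv u x * x ^ e) volume a b :=
    intervalIntegrable_mul_of_bound hab (measurable_deriv u) K
      (fun x hx => abs_deriv_le_of_lipschitzOn (Icc_mem_nhds hx.1 hx.2) hu)
      (continuousOn_pow e)
  have hI2 : IntervalIntegrable (fun x => u x * ((e : ℝ) * x ^ (e - 1))) volume a b := by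
    apply ContinuousOn.intervalIntegrable
    rw [uIcc_of_le hab]
    exact hu.continuousOn.mul ((continuousOn_const).mul (continuousOn_pow (e - 1)))
  have hsplit : ∫ x in a..b, deriv F x =
      (∫ x in a..b, deriv u x * x ^ e) + ∫ x in a..b, u x * ((e : ℝ) * x ^ (e - 1)) := by
    rw [← intervalIntegral.integral_add hI1 hI2]
    refine intervalIntegral_congr_Ioo hab ?_
    filter_upwards [ae_differentiableAt_Ioo hu] with x hx hmem
    exact (((hx hmem).hasDerivAt.mul (hasDerivAt_pow e x)).deriv).trans (by ring)
  have hconst : ∫ x in a..b, u x * ((e : ℝ) * x ^ (e - 1)) =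
      (e : ℝ) * ∫ x in a..b, u x * x ^ (e - 1) := by
    rw [← intervalIntegral.integral_const_mul]
    exact intervalIntegral.integral_congr fun x _ => by ring
  have := hFTC
  rw [hsplit, hconst] at this
  simp only [hF] at this ⊢
  linarith

theorem key_integration_by_parts_estimate (d : ℕ) (hd : 2 ≤ d)
    (a τ b : ℝ) (ha : 0 < a) (haτ : a ≤ τ) (hτb : τ ≤ b)
    (ustar u₀ Mu₀ : ℝ → ℝ)
    (hustarLip : ∃ K : NNReal, LipschitzOnWith K ustar (Set.Icc a b))
    (hu₀Lip : ∃ K : NNReal, LipschitzOnWith K u₀ (Set.Icc a b))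
    (hMLip : ∃ K : NNReal, LipschitzOnWith K Mu₀ (Set.Icc a b))
    (hnonneg : ∀ r ∈ Set.Icc a b, 0 ≤ u₀ r)
    (hle₁ : ∀ r ∈ Set.Icc a b, u₀ r ≤ ustar r)
    (hle₂ : ∀ r ∈ Set.Icc a b, ustar r ≤ Mu₀ r)
    (hba : ustar a = u₀ a) (hbb : ustar b = u₀ b)
    (hmono₁ : AntitoneOn ustar (Set.Icc a τ))
    (hmono₂ : MonotoneOn ustar (Set.Icc τ b)) :
    (∫ r in a..b, |deriv ustar r| * r ^ (d - 1)) ≤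
      (∫ r in a..b, |deriv u₀ r| * r ^ (d - 1)) +
        (d - 1 : ℝ) * ∫ r in a..τ, Mu₀ r * r ^ (d - 2) := by
  obtain ⟨Ku, hKu⟩ := hustarLip
  obtain ⟨K₀, hK₀⟩ := hu₀Lip
  set e := d - 1 with he
  have hd2 : d - 2 = e - 1 := by omega
  have hcast : ((e : ℕ) : ℝ) = (d : ℝ) - 1 := by
    rw [he]; push_cast [Nat.cast_sub (show 1 ≤ d by omega)]; ring
  rw [hd2, ← hcast]
  have hab : a ≤ b := haτ.trans hτb
  -- bounds for derivatives
  have hbd₁ : ∀ c c' : ℝ, a ≤ c → c' ≤ b → ∀ x ∈ Ioo c c', |deriv ustar x| ≤ (Ku : ℝ) :=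
    fun c c' hc hc' x hx => abs_deriv_le_of_lipschitzOn
      (Icc_mem_nhds (lt_of_le_of_lt hc hx.1) (lt_of_lt_of_le hx.2 hc')) hKu
  have hbd₂ : ∀ c c' : ℝ, a ≤ c → c' ≤ b → ∀ x ∈ Ioo c c', |deriv u₀ x| ≤ (K₀ : ℝ) :=
    fun c c' hc hc' x hx => abs_deriv_le_of_lipschitzOn
      (Icc_mem_nhds (lt_of_le_of_lt hc hx.1) (lt_of_lt_of_le hx.2 hc')) hK₀
  -- integrability of the absolute-value integrands
  have hS1int : IntervalIntegrable (fun x => |deriv ustar x| * x ^ e) volume a τ :=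
    intervalIntegrable_mul_of_bound haτ (measurable_deriv ustar).abs Ku
      (fun x hx => by rw [abs_abs]; exact hbd₁ a τ le_rfl hτb x hx) (continuousOn_pow e)
  have hS2int : IntervalIntegrable (fun x => |deriv ustar x| * x ^ e) volume τ b :=
    intervalIntegrable_mul_of_bound hτb (measurable_deriv ustar).abs Ku
      (fun x hx => by rw [abs_abs]; exact hbd₁ τ b haτ le_rfl x hx) (continuousOn_pow e)
  have hT1int : IntervalIntegrable (fun x => |deriv u₀ x| * x ^ e) volume a τ :=
    intervalIntegrable_mul_of_bound haτ (measurable_deriv u₀).abs K₀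
      (fun x hx => by rw [abs_abs]; exact hbd₂ a τ le_rfl hτb x hx) (continuousOn_pow e)
  have hT2int : IntervalIntegrable (fun x => |deriv u₀ x| * x ^ e) volume τ b :=
    intervalIntegrable_mul_of_bound hτb (measurable_deriv u₀).abs K₀
      (fun x hx => by rw [abs_abs]; exact hbd₂ τ b haτ le_rfl x hx) (continuousOn_pow e)
  have hU1int : IntervalIntegrable (fun x => deriv u₀ x * x ^ e) volume a τ :=
    intervalIntegrable_mul_of_bound haτ (measurable_deriv u₀) K₀
      (hbd₂ a τ le_rfl hτb) (continuousOn_pow e)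
  have hU2int : IntervalIntegrable (fun x => deriv u₀ x * x ^ e) volume τ b :=
    intervalIntegrable_mul_of_bound hτb (measurable_deriv u₀) K₀
      (hbd₂ τ b haτ le_rfl) (continuousOn_pow e)
  -- IBP identities
  have hIBP1 : ∫ x in a..τ, deriv ustar x * x ^ e =
      ustar τ * τ ^ e - ustar a * a ^ e - (e : ℝ) * ∫ x in a..τ, ustar x * x ^ (e - 1) :=
    ibp_lipschitz haτ e (hKu.mono (Icc_subset_Icc_right hτb))
  have hIBP2 : ∫ x in τ..b, deriv ustar x * x ^ e =
      ustar b * b ^ e - ustar τ * τ ^ e - (e : ℝ) * ∫ x in τ..b, ustar x * x ^ (e - 1) :=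
    ibp_lipschitz hτb e (hKu.mono (Icc_subset_Icc_left haτ))
  have hIBP3 : ∫ x in a..τ, deriv u₀ x * x ^ e =
      u₀ τ * τ ^ e - u₀ a * a ^ e - (e : ℝ) * ∫ x in a..τ, u₀ x * x ^ (e - 1) :=
    ibp_lipschitz haτ e (hK₀.mono (Icc_subset_Icc_right hτb))
  have hIBP4 : ∫ x in τ..b, deriv u₀ x * x ^ e =
      u₀ b * b ^ e - u₀ τ * τ ^ e - (e : ℝ) * ∫ x in τ..b, u₀ x * x ^ (e - 1) :=
    ibp_lipschitz hτb e (hK₀.mono (Icc_subset_Icc_left haτ))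
  -- sign identities for ustar
  have hS1 : ∫ x in a..τ, |deriv ustar x| * x ^ e = -(∫ x in a..τ, deriv ustar x * x ^ e) := by
    rw [← intervalIntegral.integral_neg]
    refine intervalIntegral_congr_Ioo haτ (Filter.Eventually.of_forall fun x hx => ?_)
    rw [abs_of_nonpos (deriv_nonpos_of_antitoneOn hmono₁ hx)]; ring
  have hS2 : ∫ x in τ..b, |deriv ustar x| * x ^ e = ∫ x in τ..b, deriv ustar x * x ^ e := by
    refine intervalIntegral_congr_Ioo hτb (Filter.Eventually.of_forall fun x hx => ?_)
    rw [abs_of_nonneg (deriv_nonneg_of_monotoneOn hmono₂ hx)]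
  -- lower bounds for u₀
  have hT1 : -(∫ x in a..τ, deriv u₀ x * x ^ e) ≤ ∫ x in a..τ, |deriv u₀ x| * x ^ e := by
    rw [← intervalIntegral.integral_neg]
    refine intervalIntegral.integral_mono_on haτ hU1int.neg hT1int fun x hx => ?_
    calc -(deriv u₀ x * x ^ e) = (-(deriv u₀ x)) * x ^ e := by ring
      _ ≤ |deriv u₀ x| * x ^ e := mul_le_mul_of_nonneg_right (neg_le_abs _)
          (pow_nonneg (ha.le.trans hx.1) e)
  have hT2 : (∫ x in τ..b, deriv u₀ x * x ^ e) ≤ ∫ x in τ..b, |deriv u₀ x| * x ^ e := by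
    refine intervalIntegral.integral_mono_on hτb hU2int hT2int fun x hx => ?_
    exact mul_le_mul_of_nonneg_right (le_abs_self _)
      (pow_nonneg ((ha.le.trans haτ).trans hx.1) e)
  -- splitting
  have hLHS : (∫ x in a..b, |deriv ustar x| * x ^ e) =
      (∫ x in a..τ, |deriv ustar x| * x ^ e) + ∫ x in τ..b, |deriv ustar x| * x ^ e :=
    (intervalIntegral.integral_add_adjacent_intervals hS1int hS2int).symm
  have hRHS : (∫ x in a..b, |deriv u₀ x| * x ^ e) =
      (∫ x in a..τ, |deriv u₀ x| * x ^ e) + ∫ x in τ..b, |deriv u₀ x| * x ^ e :=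
    (intervalIntegral.integral_add_adjacent_intervals hT1int hT2int).symm
  -- comparisons of the zeroth-order integrals
  have hcont : ∀ (f : ℝ → ℝ), (∃ K : NNReal, LipschitzOnWith K f (Icc a b)) →
      ∀ c c' : ℝ, a ≤ c → c' ≤ b → c ≤ c' →
      IntervalIntegrable (fun x => f x * x ^ (e - 1)) volume c c' := by
    intro f ⟨K, hK⟩ c c' hc hc' hcc'
    apply ContinuousOn.intervalIntegrable
    rw [uIcc_of_le hcc']
    exact ((hK.continuousOn.mono (Icc_subset_Icc hc hc')).mul (continuousOn_pow (e - 1)))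
  have hQ2P2 : (∫ x in τ..b, u₀ x * x ^ (e - 1)) ≤ ∫ x in τ..b, ustar x * x ^ (e - 1) := by
    refine intervalIntegral.integral_mono_on hτb
      (hcont u₀ ⟨K₀, hK₀⟩ τ b haτ le_rfl hτb) (hcont ustar ⟨Ku, hKu⟩ τ b haτ le_rfl hτb)
      fun x hx => mul_le_mul_of_nonneg_right (hle₁ x ⟨haτ.trans hx.1, hx.2⟩)
        (pow_nonneg ((ha.le.trans haτ).trans hx.1) (e - 1))
  have hP1R : (∫ x in a..τ, ustar x * x ^ (e - 1)) ≤ ∫ x in a..τ, Mu₀ x * x ^ (e - 1) := by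
    refine intervalIntegral.integral_mono_on haτ
      (hcont ustar ⟨Ku, hKu⟩ a τ le_rfl hτb haτ) (hcont Mu₀ hMLip a τ le_rfl hτb haτ)
      fun x hx => mul_le_mul_of_nonneg_right (hle₂ x ⟨hx.1, hx.2.trans hτb⟩)
        (pow_nonneg (ha.le.trans hx.1) (e - 1))
  have hQ1 : 0 ≤ ∫ x in a..τ, u₀ x * x ^ (e - 1) :=
    intervalIntegral.integral_nonneg haτ fun x hx =>
      mul_nonneg (hnonneg x ⟨hx.1, hx.2.trans hτb⟩) (pow_nonneg (ha.le.trans hx.1) (e - 1))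
  -- final assembly
  have huτ : u₀ τ ≤ ustar τ := hle₁ τ ⟨haτ, hτb⟩
  have hτpow : (0:ℝ) ≤ τ ^ e := pow_nonneg (ha.le.trans haτ) e
  have hecast : (0:ℝ) ≤ (e : ℝ) := Nat.cast_nonneg e
  have hmul1 : (e : ℝ) * (∫ x in a..τ, ustar x * x ^ (e - 1)) ≤
      (e : ℝ) * ((∫ x in a..τ, u₀ x * x ^ (e - 1)) + ∫ x in a..τ, Mu₀ x * x ^ (e - 1)) :=
    mul_le_mul_of_nonneg_left (by linarith) hecast
  have hmul2 : (e : ℝ) * (∫ x in τ..b, u₀ x * x ^ (e - 1)) ≤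
      (e : ℝ) * (∫ x in τ..b, ustar x * x ^ (e - 1)) :=
    mul_le_mul_of_nonneg_left hQ2P2 hecast
  rw [hba] at hIBP1
  rw [hbb] at hIBP2
  have hτ2 : u₀ τ * τ ^ e ≤ ustar τ * τ ^ e := mul_le_mul_of_nonneg_right huτ hτpow
  rw [hLHS, hRHS, hS1, hS2, hIBP1, hIBP2]
  linarith [hT1, hT2, hIBP3, hIBP4]
end

section
/- Let d ≥ 2 and let u* : ℝ^d → ℝ be a continuous radial function that is subharmonic on an open set A ⊂ ℝ^d \ {0} that is radially symmetric (i.e., x ∈ A and |y| = |x| implies y ∈ A). If (a,b) ⊂ (0,∞) is an interval with {x : a < |x| < b} ⊂ A, then the radial profile r ↦ u*(r) has no strict local maximum in (a,b); consequently there exists τ ∈ [a,b] such that u* is non-increasing on [a,τ] and non-decreasing on [τ,b]. -/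
/-!
A continuous function below its value at `x` on a ball whose average dominates that value equals
it on the whole ball, so every local maximum of a continuous sub-mean-value function is locally
constant. For the radial profile `U` this forces the rightmost maximiser of `U` on `[s, t]` to be
an endpoint, i.e. `U` is quasiconvex on `[a, b]`: it lies below the larger endpoint value on each
subinterval. A quasiconvex function decreases up to a minimiser and increases after it, and it
cannot have a strict local maximum.
-/

open MeasureTheory Set

open Filter Topology Metric

theorem eqOn_const_of_le_of_le_setAverage {X : Type*} [TopologicalSpace X] [MeasurableSpace X]
    [OpensMeasurableSpace X] {μ : Measure X} [μ.IsOpenPosMeasure] {s : Set X} {f : X → ℝ} {c : ℝ}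
    (hs : IsOpen s) (hμs : μ s ≠ ⊤) (hf : ContinuousOn f s) (hfi : IntegrableOn f s μ)
    (hle : ∀ y ∈ s, f y ≤ c) (hc : c ≤ ⨍ y in s, f y ∂μ) : EqOn f (fun _ ↦ c) s := by
  have : IsFiniteMeasure (μ.restrict s) := isFiniteMeasure_restrict.mpr hμs
  set m := ⨍ y in s, f y ∂μ
  have hnonneg : 0 ≤ᵐ[μ.restrict s] fun y ↦ m - f y :=
    (ae_restrict_mem₀ hs.nullMeasurableSet).mono fun y hy ↦ sub_nonneg.2 ((hle y hy).trans hc)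
  have hzero : ∫ y in s, (m - f y) ∂μ = 0 := by
    rw [← neg_eq_zero, ← integral_neg]
    simpa using integral_sub_average (μ.restrict s) f
  have hae := (setIntegral_eq_zero_iff_of_nonneg_ae hnonneg
    ((integrableOn_const hμs).sub hfi)).1 hzero
  have hfm : EqOn f (fun _ ↦ m) s :=
    fun y hy ↦ (sub_eq_zero.1 (μ.eqOn_open_of_ae_eq hae hs (continuousOn_const.sub hf)
      continuousOn_const hy)).symm
  exact fun y hy ↦ le_antisymm (hle y hy) (hc.trans (hfm hy).ge)

theorem IsLocalMax.eventually_eq_of_frequently_le_setAverage_ball {X : Type*} [PseudoMetricSpace X]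
    [ProperSpace X] [MeasurableSpace X] [OpensMeasurableSpace X] {μ : Measure X}
    [μ.IsOpenPosMeasure] [IsFiniteMeasureOnCompacts μ] {f : X → ℝ} {x : X} (hf : Continuous f)
    (hmax : IsLocalMax f x) (hsub : ∃ᶠ r in 𝓝[>] 0, f x ≤ ⨍ y in ball x r, f y ∂μ) :
    ∀ᶠ y in 𝓝 x, f y = f x := by
  obtain ⟨ρ, hρ, hle⟩ := Metric.eventually_nhds_iff.1 hmax
  obtain ⟨r, hmean, hr⟩ := (hsub.and_eventually (Ioo_mem_nhdsGT hρ)).exists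
  have hfi : IntegrableOn f (ball x r) μ :=
    (hf.locallyIntegrable.integrableOn_isCompact (isCompact_closedBall x r)).mono_set
      ball_subset_closedBall
  filter_upwards [ball_mem_nhds x hr.1] with y hy
  exact eqOn_const_of_le_of_le_setAverage isOpen_ball measure_ball_lt_top.ne hf.continuousOn hfi
    (fun z hz ↦ hle (mem_ball.1 hz |>.trans hr.2)) hmean hy

theorem le_max_of_forall_isLocalMax_eventually_eq {g : ℝ → ℝ} {s t r : ℝ}
    (hg : ContinuousOn g (Icc s t))
    (hloc : ∀ x ∈ Ioo s t, IsLocalMax g x → ∀ᶠ y in 𝓝 x, g y = g x) (hr : r ∈ Icc s t) :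
    g r ≤ max (g s) (g t) := by
  by_contra! hlt
  obtain ⟨m, hm, hmax⟩ := isCompact_Icc.exists_isMaxOn ⟨r, hr⟩ hg
  set K := Icc s t ∩ g ⁻¹' {g m}
  have hK : IsClosed K := hg.preimage_isClosed_of_isClosed isClosed_Icc isClosed_singleton
  have hKbdd : BddAbove K := bddAbove_Icc.mono inter_subset_left
  set x := sSup K
  obtain ⟨hx, hgx⟩ : x ∈ K := hK.csSup_mem ⟨m, hm, rfl⟩ hKbdd
  have hrm : max (g s) (g t) < g x := hlt.trans_le (hgx ▸ hmax hr)
  have hxs : s < x := hx.1.lt_of_ne fun h ↦ by rw [← h] at hrm; exact (le_max_left _ _).not_gt hrm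
  have hxt : x < t := hx.2.lt_of_ne fun h ↦ by rw [h] at hrm; exact (le_max_right _ _).not_gt hrm
  have hxmax : IsLocalMax g x :=
    mem_of_superset (Icc_mem_nhds hxs hxt) fun y hy ↦ (hgx ▸ hmax hy : g y ≤ g x)
  have hright : ∀ᶠ y in 𝓝[>] x, (g y = g x ∧ y ∈ Icc s t) ∧ x < y :=
    (((hloc x ⟨hxs, hxt⟩ hxmax).and (Icc_mem_nhds hxs hxt)).filter_mono nhdsWithin_le_nhds).and
      self_mem_nhdsWithin
  obtain ⟨y, ⟨hgy, hyI⟩, hxy⟩ := hright.exists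
  exact (le_csSup hKbdd ⟨hyI, hgy.trans hgx⟩).not_gt hxy

theorem QuasiconvexOn.le_max_of_mem_Icc {s : Set ℝ} {g : ℝ → ℝ} (hg : QuasiconvexOn ℝ s g)
    {x y z : ℝ} (hx : x ∈ s) (hy : y ∈ s) (hz : z ∈ Icc x y) : g z ≤ max (g x) (g y) :=
  (convex_iff_ordConnected.1 (hg (max (g x) (g y)))).out ⟨hx, le_max_left _ _⟩
    ⟨hy, le_max_right _ _⟩ hz |>.2

theorem quasiconvexOn_Icc_of_forall_isLocalMax_eventually_eq {g : ℝ → ℝ} {a b : ℝ}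
    (hg : ContinuousOn g (Icc a b))
    (hloc : ∀ x ∈ Ioo a b, IsLocalMax g x → ∀ᶠ y in 𝓝 x, g y = g x) :
    QuasiconvexOn ℝ (Icc a b) g := fun r ↦ by
  refine convex_iff_ordConnected.2 ⟨fun x ⟨hx, hgx⟩ y ⟨hy, hgy⟩ z hz ↦ ⟨?_, ?_⟩⟩
  · exact ⟨hx.1.trans hz.1, hz.2.trans hy.2⟩
  · exact (le_max_of_forall_isLocalMax_eventually_eq (hg.mono (Icc_subset_Icc hx.1 hy.2))
      (fun w hw ↦ hloc w ⟨hx.1.trans_lt hw.1, hw.2.trans_le hy.2⟩) hz).trans (max_le hgx hgy)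

theorem QuasiconvexOn.exists_antitoneOn_monotoneOn {g : ℝ → ℝ} {a b : ℝ}
    (hq : QuasiconvexOn ℝ (Icc a b) g) (hg : ContinuousOn g (Icc a b)) (hab : a ≤ b) :
    ∃ τ ∈ Icc a b, AntitoneOn g (Icc a τ) ∧ MonotoneOn g (Icc τ b) := by
  obtain ⟨τ, hτ, hmin⟩ := isCompact_Icc.exists_isMinOn (nonempty_Icc.2 hab) hg
  refine ⟨τ, hτ, fun x hx y hy hxy ↦ ?_, fun x hx y hy hxy ↦ ?_⟩
  · have hxI : x ∈ Icc a b := ⟨hx.1, hx.2.trans hτ.2⟩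
    exact (hq.le_max_of_mem_Icc hxI hτ ⟨hxy, hy.2⟩).trans (max_le le_rfl (hmin hxI))
  · have hyI : y ∈ Icc a b := ⟨hτ.1.trans hy.1, hy.2⟩
    exact (hq.le_max_of_mem_Icc hτ hyI ⟨hx.1, hxy⟩).trans (max_le (hmin hyI) le_rfl)

theorem eventually_eq_of_isLocalMax_of_radial {E : Type*} [NormedAddCommGroup E]
    [NormedSpace ℝ E] {u : E → ℝ} {U : ℝ → ℝ} (hU : ∀ x, u x = U ‖x‖) {v : E} (hv : ‖v‖ = 1)
    {t : ℝ} (ht : 0 < t) (hloc : IsLocalMax u (t • v) → ∀ᶠ y in 𝓝 (t • v), u y = u (t • v))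
    (hmax : IsLocalMax U t) : ∀ᶠ r in 𝓝 t, U r = U t := by
  have hnorm : ∀ r : ℝ, ‖r • v‖ = |r| := fun r ↦ by rw [norm_smul, hv, mul_one, Real.norm_eq_abs]
  have hu : IsLocalMax u (t • v) := by
    rw [show u = U ∘ norm from funext hU]
    exact IsLocalMax.comp_continuous (by rwa [hnorm, abs_of_pos ht]) continuous_norm.continuousAt
  have hline : Continuous fun r : ℝ ↦ r • v := by fun_prop
  filter_upwards [hline.continuousAt.eventually (hloc hu), lt_mem_nhds ht] with r hr hr0
  rwa [hU, hU, hnorm, hnorm, abs_of_pos hr0, abs_of_pos ht] at hr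

theorem radial_subharmonic_no_strict_local_max_general (d : ℕ) (hd : 2 ≤ d)
    (u : EuclideanSpace ℝ (Fin d) → ℝ) (hu : Continuous u)
    (A : Set (EuclideanSpace ℝ (Fin d)))
    (hsub : ∀ x ∈ A, ∃ ε > 0, ∀ r : ℝ, 0 < r → r < ε →
      u x ≤ ⨍ y in Metric.ball x r, u y)
    (U : ℝ → ℝ) (hU : ∀ x : EuclideanSpace ℝ (Fin d), u x = U ‖x‖)
    (a b : ℝ) (h0a : 0 ≤ a) (hab : a < b)
    (hann : {x : EuclideanSpace ℝ (Fin d) | a < ‖x‖ ∧ ‖x‖ < b} ⊆ A) :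
    (¬ ∃ t₀ ∈ Set.Ioo a b, ∃ c e : ℝ, a < c ∧ c < t₀ ∧ t₀ < e ∧ e < b ∧
        (∀ r ∈ Set.Ioo c e, U r ≤ U t₀) ∧ U c < U t₀ ∧ U e < U t₀) ∧
      ∃ τ ∈ Set.Icc a b, AntitoneOn U (Set.Icc a τ) ∧ MonotoneOn U (Set.Icc τ b) := by
  obtain ⟨v, hv⟩ : ∃ v : EuclideanSpace ℝ (Fin d), ‖v‖ = 1 :=
    ⟨EuclideanSpace.single ⟨0, by omega⟩ 1, by simp⟩
  have hUv : ∀ r, 0 ≤ r → U r = u (r • v) := fun r hr ↦ by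
    rw [hU, norm_smul, hv, mul_one, Real.norm_of_nonneg hr]
  have hcont : ContinuousOn U (Icc a b) :=
    (hu.comp (continuous_id.smul continuous_const)).continuousOn.congr
      fun r hr ↦ hUv r (h0a.trans hr.1)
  have hloc : ∀ t ∈ Ioo a b, IsLocalMax U t → ∀ᶠ r in 𝓝 t, U r = U t := fun t ht ↦ by
    have ht0 : 0 < t := h0a.trans_lt ht.1
    have htv : t • v ∈ A := hann (by simpa [norm_smul, hv, abs_of_pos ht0] using ht)
    obtain ⟨ε, hε, hmean⟩ := hsub _ htv
    refine eventually_eq_of_isLocalMax_of_radial hU hv ht0 fun hmax ↦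
      hmax.eventually_eq_of_frequently_le_setAverage_ball (μ := volume) hu
        (Eventually.frequently ?_)
    filter_upwards [Ioo_mem_nhdsGT hε] with r hr using hmean r hr.1 hr.2
  have hq := quasiconvexOn_Icc_of_forall_isLocalMax_eventually_eq hcont hloc
  refine ⟨?_, hq.exists_antitoneOn_monotoneOn hcont hab.le⟩
  rintro ⟨t₀, -, c, e, hac, hct, hte, heb, -, hc, he⟩
  exact (hq.le_max_of_mem_Icc ⟨hac.le, (hct.trans (hte.trans heb)).le⟩
    ⟨(hac.trans (hct.trans hte)).le, heb.le⟩ ⟨hct.le, hte.le⟩).not_gt (max_lt hc he)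

theorem radial_subharmonic_no_strict_local_max (d : ℕ) (hd : 2 ≤ d)
    (u : EuclideanSpace ℝ (Fin d) → ℝ) (hu : Continuous u)
    (hrad : ∀ x y : EuclideanSpace ℝ (Fin d), ‖x‖ = ‖y‖ → u x = u y)
    (A : Set (EuclideanSpace ℝ (Fin d))) (hA : IsOpen A) (hA0 : (0 : EuclideanSpace ℝ (Fin d)) ∉ A)
    (hAsym : ∀ x y : EuclideanSpace ℝ (Fin d), x ∈ A → ‖y‖ = ‖x‖ → y ∈ A)
    (hsub : ∀ x ∈ A, ∃ ε > 0, ∀ r : ℝ, 0 < r → r < ε →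
      u x ≤ ⨍ y in Metric.ball x r, u y)
    (U : ℝ → ℝ) (hU : ∀ x : EuclideanSpace ℝ (Fin d), u x = U ‖x‖)
    (a b : ℝ) (h0a : 0 ≤ a) (hab : a < b)
    (hann : {x : EuclideanSpace ℝ (Fin d) | a < ‖x‖ ∧ ‖x‖ < b} ⊆ A) :
    (¬ ∃ t₀ ∈ Set.Ioo a b, ∃ c e : ℝ, a < c ∧ c < t₀ ∧ t₀ < e ∧ e < b ∧
        (∀ r ∈ Set.Ioo c e, U r ≤ U t₀) ∧ U c < U t₀ ∧ U e < U t₀) ∧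
      ∃ τ ∈ Set.Icc a b, AntitoneOn U (Set.Icc a τ) ∧ MonotoneOn U (Set.Icc τ b) :=
  radial_subharmonic_no_strict_local_max_general d hd u hu A hsub U hU a b h0a hab hann
end

section
/- Let d ≥ 2 and let u₀ : [0, π] → [0, ∞) be Lipschitz with polar extension to S^d. Suppose 0 ≤ a ≤ τ ≤ b ≤ π/2, and let u*, M̃u₀ : [0, π] → [0,∞) be Lipschitz with u₀ ≤ u* ≤ M̃u₀ pointwise, u*(a) = u₀(a), u*(b) = u₀(b), u* non-increasing on [a, τ] and non-decreasing on [τ, b]. Then ∫_a^b |(u*)'(θ)| (sin θ)^{d−1} dθ ≤ ∫_a^b |u₀'(θ)| (sin θ)^{d−1} dθ + ∫_a^τ (M̃u₀(θ) − u₀(θ)) · (d−1)(sin θ)^{d−2} cos θ dθ. -/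
/-!
On `[a, τ]` the function `u*` decreases, so `|u*'| = -u*'`, and on `[τ, b]` it increases,
so `|u*'| = u*'`. Integrating by parts against the weight `w = sin^{d-1}` on both pieces,
and comparing with the same computation for `u₀`, for which only `±∫ u₀' w ≤ ∫ |u₀'| w`
is available, leaves the boundary terms `(u* - u₀) w` (zero at `a` and `b`, entering with
a minus sign at `τ`) plus `∫_a^τ (u* - u₀) w' - ∫_τ^b (u* - u₀) w'`. As `w' ≥ 0` on
`[0, π/2]` and `u₀ ≤ u* ≤ M̃u₀`, this is at most `∫_a^τ (M̃u₀ - u₀) w'`.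
-/

open Real intervalIntegral MeasureTheory Set

section WeightedVariation

variable {f g w : ℝ → ℝ} {s t : ℝ}

theorem integral_abs_deriv_mul_of_antitoneOn (hst : s ≤ t) (hf : AntitoneOn f (Icc s t)) :
    ∫ x in s..t, |deriv f x| * w x = -∫ x in s..t, deriv f x * w x := by
  rw [← intervalIntegral.integral_neg]
  refine integral_congr_Ioo_of_le hst fun x hx => ?_
  have hderiv : deriv f x ≤ 0 := by
    rw [← derivWithin_of_mem_nhds (Icc_mem_nhds hx.1 hx.2)]
    exact hf.derivWithin_nonpos
  rw [abs_of_nonpos hderiv, neg_mul]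

theorem integral_abs_deriv_mul_of_monotoneOn (hst : s ≤ t) (hf : MonotoneOn f (Icc s t)) :
    ∫ x in s..t, |deriv f x| * w x = ∫ x in s..t, deriv f x * w x := by
  refine integral_congr_Ioo_of_le hst fun x hx => ?_
  have hderiv : 0 ≤ deriv f x := by
    rw [← derivWithin_of_mem_nhds (Icc_mem_nhds hx.1 hx.2)]
    exact hf.derivWithin_nonneg
  rw [abs_of_nonneg hderiv]

theorem abs_integral_deriv_mul_le (hst : s ≤ t) (hw : ∀ x ∈ Icc s t, 0 ≤ w x) :
    |∫ x in s..t, deriv f x * w x| ≤ ∫ x in s..t, |deriv f x| * w x := by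
  refine (abs_integral_le_integral_abs hst).trans_eq (integral_congr_Ioo_of_le hst fun x hx => ?_)
  simp only [abs_mul, abs_of_nonneg (hw x (Ioo_subset_Icc_self hx))]

theorem AbsolutelyContinuousOnInterval.integral_deriv_mul_eq
    (hf : AbsolutelyContinuousOnInterval f s t) (hw : AbsolutelyContinuousOnInterval w s t) :
    ∫ x in s..t, deriv f x * w x = f t * w t - f s * w s - ∫ x in s..t, f x * deriv w x := by
  rw [hf.integral_mul_deriv_eq_deriv_mul hw]
  ring

theorem AbsolutelyContinuousOnInterval.intervalIntegrable_mul_deriv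
    (hf : AbsolutelyContinuousOnInterval f s t) (hw : AbsolutelyContinuousOnInterval w s t) :
    IntervalIntegrable (fun x => f x * deriv w x) volume s t :=
  hw.intervalIntegrable_deriv.continuousOn_mul hf.continuousOn

theorem AbsolutelyContinuousOnInterval.intervalIntegrable_abs_deriv_mul
    (hf : AbsolutelyContinuousOnInterval f s t) (hw : AbsolutelyContinuousOnInterval w s t) :
    IntervalIntegrable (fun x => |deriv f x| * w x) volume s t :=
  hf.intervalIntegrable_deriv.abs.mul_continuousOn hw.continuousOn

theorem AbsolutelyContinuousOnInterval.integral_sub_mul_deriv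
    (hf : AbsolutelyContinuousOnInterval f s t) (hg : AbsolutelyContinuousOnInterval g s t)
    (hw : AbsolutelyContinuousOnInterval w s t) :
    ∫ x in s..t, (f x - g x) * deriv w x
      = (∫ x in s..t, f x * deriv w x) - ∫ x in s..t, g x * deriv w x := by
  simp only [sub_mul]
  exact integral_sub (hf.intervalIntegrable_mul_deriv hw) (hg.intervalIntegrable_mul_deriv hw)

theorem integral_abs_deriv_mul_le_of_antitoneOn (hst : s ≤ t) (hf : AntitoneOn f (Icc s t))
    (hfac : AbsolutelyContinuousOnInterval f s t) (hgac : AbsolutelyContinuousOnInterval g s t)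
    (hwac : AbsolutelyContinuousOnInterval w s t) (hw : ∀ x ∈ Icc s t, 0 ≤ w x) :
    ∫ x in s..t, |deriv f x| * w x ≤ (∫ x in s..t, |deriv g x| * w x)
      + (f s - g s) * w s - (f t - g t) * w t + ∫ x in s..t, (f x - g x) * deriv w x := by
  have hg := neg_le_of_abs_le (abs_integral_deriv_mul_le (f := g) hst hw)
  rw [integral_abs_deriv_mul_of_antitoneOn hst hf, hfac.integral_deriv_mul_eq hwac,
    hfac.integral_sub_mul_deriv hgac hwac]
  rw [hgac.integral_deriv_mul_eq hwac] at hg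
  linarith

theorem integral_abs_deriv_mul_le_of_monotoneOn (hst : s ≤ t) (hf : MonotoneOn f (Icc s t))
    (hfac : AbsolutelyContinuousOnInterval f s t) (hgac : AbsolutelyContinuousOnInterval g s t)
    (hwac : AbsolutelyContinuousOnInterval w s t) (hw : ∀ x ∈ Icc s t, 0 ≤ w x) :
    ∫ x in s..t, |deriv f x| * w x ≤ (∫ x in s..t, |deriv g x| * w x)
      + (f t - g t) * w t - (f s - g s) * w s - ∫ x in s..t, (f x - g x) * deriv w x := by
  have hg := le_of_abs_le (abs_integral_deriv_mul_le (f := g) hst hw)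
  rw [integral_abs_deriv_mul_of_monotoneOn hst hf, hfac.integral_deriv_mul_eq hwac,
    hfac.integral_sub_mul_deriv hgac hwac]
  rw [hgac.integral_deriv_mul_eq hwac] at hg
  linarith

end WeightedVariation

theorem integral_abs_deriv_mul_le_of_antitoneOn_of_monotoneOn {f g M w : ℝ → ℝ}
    {a τ b : ℝ} (haτ : a ≤ τ) (hτb : τ ≤ b)
    (hf₁ : AntitoneOn f (Icc a τ)) (hf₂ : MonotoneOn f (Icc τ b))
    (hfac : AbsolutelyContinuousOnInterval f a b) (hgac : AbsolutelyContinuousOnInterval g a b)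
    (hwac : AbsolutelyContinuousOnInterval w a b) (hM : ContinuousOn M (Icc a τ))
    (hgf : ∀ x ∈ Icc a b, g x ≤ f x) (hfM : ∀ x ∈ Icc a τ, f x ≤ M x)
    (hfga : f a = g a) (hfgb : f b = g b)
    (hw : ∀ x ∈ Icc a b, 0 ≤ w x) (hw' : ∀ x ∈ Icc a b, 0 ≤ deriv w x) :
    ∫ x in a..b, |deriv f x| * w x ≤
      (∫ x in a..b, |deriv g x| * w x) + ∫ x in a..τ, (M x - g x) * deriv w x := by
  have hab : a ≤ b := haτ.trans hτb
  have hτ : τ ∈ uIcc a b := by simp [uIcc_of_le hab, haτ, hτb]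
  have hleft : uIcc a τ ⊆ uIcc a b := uIcc_subset_uIcc_left hτ
  have hright : uIcc τ b ⊆ uIcc a b := uIcc_subset_uIcc_right hτ
  have hsplit : ∀ {h : ℝ → ℝ}, AbsolutelyContinuousOnInterval h a b →
      ∫ x in a..b, |deriv h x| * w x
        = (∫ x in a..τ, |deriv h x| * w x) + ∫ x in τ..b, |deriv h x| * w x := fun hh =>
    (integral_add_adjacent_intervals
      ((hh.mono hleft).intervalIntegrable_abs_deriv_mul (hwac.mono hleft))
      ((hh.mono hright).intervalIntegrable_abs_deriv_mul (hwac.mono hright))).symm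
  have hdesc := integral_abs_deriv_mul_le_of_antitoneOn haτ hf₁ (hfac.mono hleft)
    (hgac.mono hleft) (hwac.mono hleft) fun x hx => hw x ⟨hx.1, hx.2.trans hτb⟩
  have hasc := integral_abs_deriv_mul_le_of_monotoneOn hτb hf₂ (hfac.mono hright)
    (hgac.mono hright) (hwac.mono hright) fun x hx => hw x ⟨haτ.trans hx.1, hx.2⟩
  have hbdry_τ : 0 ≤ (f τ - g τ) * w τ :=
    mul_nonneg (sub_nonneg.2 (hgf τ ⟨haτ, hτb⟩)) (hw τ ⟨haτ, hτb⟩)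
  have hcorr_left :
      ∫ x in a..τ, (f x - g x) * deriv w x ≤ ∫ x in a..τ, (M x - g x) * deriv w x := by
    have hMg : ContinuousOn (fun x => M x - g x) (uIcc a τ) :=
      (uIcc_of_le haτ ▸ hM).sub (hgac.mono hleft).continuousOn
    refine integral_mono_on haτ
      (((hfac.sub hgac).mono hleft).intervalIntegrable_mul_deriv (hwac.mono hleft))
      ((hwac.mono hleft).intervalIntegrable_deriv.continuousOn_mul hMg) fun x hx => ?_
    exact mul_le_mul_of_nonneg_right (sub_le_sub_right (hfM x hx) _)
      (hw' x ⟨hx.1, hx.2.trans hτb⟩)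
  have hcorr_right : 0 ≤ ∫ x in τ..b, (f x - g x) * deriv w x :=
    integral_nonneg hτb fun x hx =>
      have hx' : x ∈ Icc a b := ⟨haτ.trans hx.1, hx.2⟩
      mul_nonneg (sub_nonneg.2 (hgf x hx')) (hw' x hx')
  rw [hsplit hfac, hsplit hgac]
  simp only [hfga, hfgb, sub_self, zero_mul] at hdesc hasc
  linarith

theorem deriv_sin_pow_sub_one {d : ℕ} (hd : 1 ≤ d) (x : ℝ) :
    deriv (fun x => sin x ^ (d - 1)) x = ((d : ℝ) - 1) * sin x ^ (d - 2) * cos x := by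
  rw [((hasDerivAt_sin x).fun_pow (d - 1)).deriv, Nat.cast_sub hd, Nat.sub_sub, Nat.cast_one]

theorem spherical_integration_by_parts_estimate_general (d : ℕ) (hd : 2 ≤ d)
    (a τ b : ℝ) (ha : 0 ≤ a) (haτ : a ≤ τ) (hτb : τ ≤ b) (hb : b ≤ π / 2)
    (ustar u₀ Mu₀ : ℝ → ℝ)
    (hu₀Lip : ∃ K : NNReal, LipschitzOnWith K u₀ (Set.Icc 0 π))
    (hustarLip : ∃ K : NNReal, LipschitzOnWith K ustar (Set.Icc 0 π))
    (hMLip : ∃ K : NNReal, LipschitzOnWith K Mu₀ (Set.Icc 0 π))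
    (hle₁ : ∀ θ ∈ Set.Icc (0:ℝ) π, u₀ θ ≤ ustar θ)
    (hle₂ : ∀ θ ∈ Set.Icc (0:ℝ) π, ustar θ ≤ Mu₀ θ)
    (hba : ustar a = u₀ a) (hbb : ustar b = u₀ b)
    (hmono₁ : AntitoneOn ustar (Set.Icc a τ))
    (hmono₂ : MonotoneOn ustar (Set.Icc τ b)) :
    (∫ θ in a..b, |deriv ustar θ| * Real.sin θ ^ (d - 1)) ≤
      (∫ θ in a..b, |deriv u₀ θ| * Real.sin θ ^ (d - 1)) +
        ∫ θ in a..τ, (Mu₀ θ - u₀ θ) * ((d - 1 : ℝ) * Real.sin θ ^ (d - 2) * Real.cos θ) := by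
  obtain ⟨K₀, hu₀⟩ := hu₀Lip
  obtain ⟨K, hustar⟩ := hustarLip
  obtain ⟨KM, hM⟩ := hMLip
  have hab : a ≤ b := haτ.trans hτb
  have hIcc : Icc a b ⊆ Icc 0 π := Icc_subset_Icc ha (by linarith [pi_pos])
  have hac : ∀ {h : ℝ → ℝ} {L : NNReal}, LipschitzOnWith L h (Icc 0 π) →
      AbsolutelyContinuousOnInterval h a b := fun hh =>
    (hh.mono (by rwa [uIcc_of_le hab])).absolutelyContinuousOnInterval
  have hsin : ∀ x ∈ Icc a b, 0 ≤ sin x := fun x hx =>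
    sin_nonneg_of_nonneg_of_le_pi (hIcc hx).1 (hIcc hx).2
  simp_rw [← deriv_sin_pow_sub_one (by omega : 1 ≤ d)]
  refine integral_abs_deriv_mul_le_of_antitoneOn_of_monotoneOn haτ hτb hmono₁ hmono₂
    (hac hustar) (hac hu₀) ((contDiff_sin.pow _).contDiffOn.absolutelyContinuousOnInterval)
    (hM.continuousOn.mono ((Icc_subset_Icc_right hτb).trans hIcc))
    (fun x hx => hle₁ x (hIcc hx)) (fun x hx => hle₂ x (hIcc ⟨hx.1, hx.2.trans hτb⟩))
    hba hbb (fun x hx => pow_nonneg (hsin x hx) _) fun x hx => ?_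
  rw [deriv_sin_pow_sub_one (by omega)]
  have hd' : (0 : ℝ) ≤ d - 1 := by
    rw [sub_nonneg]
    exact_mod_cast (by omega : 1 ≤ d)
  have hcos : 0 ≤ cos x := cos_nonneg_of_mem_Icc ⟨by linarith [pi_pos, hx.1], hx.2.trans hb⟩
  exact mul_nonneg (mul_nonneg hd' (pow_nonneg (hsin x hx) _)) hcos

theorem spherical_integration_by_parts_estimate (d : ℕ) (hd : 2 ≤ d)
    (a τ b : ℝ) (ha : 0 ≤ a) (haτ : a ≤ τ) (hτb : τ ≤ b) (hb : b ≤ π / 2)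
    (ustar u₀ Mu₀ : ℝ → ℝ)
    (hu₀Lip : ∃ K : NNReal, LipschitzOnWith K u₀ (Set.Icc 0 π))
    (hustarLip : ∃ K : NNReal, LipschitzOnWith K ustar (Set.Icc 0 π))
    (hMLip : ∃ K : NNReal, LipschitzOnWith K Mu₀ (Set.Icc 0 π))
    (hnonneg : ∀ θ ∈ Set.Icc (0:ℝ) π, 0 ≤ u₀ θ)
    (hle₁ : ∀ θ ∈ Set.Icc (0:ℝ) π, u₀ θ ≤ ustar θ)
    (hle₂ : ∀ θ ∈ Set.Icc (0:ℝ) π, ustar θ ≤ Mu₀ θ)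
    (hba : ustar a = u₀ a) (hbb : ustar b = u₀ b)
    (hmono₁ : AntitoneOn ustar (Set.Icc a τ))
    (hmono₂ : MonotoneOn ustar (Set.Icc τ b)) :
    (∫ θ in a..b, |deriv ustar θ| * Real.sin θ ^ (d - 1)) ≤
      (∫ θ in a..b, |deriv u₀ θ| * Real.sin θ ^ (d - 1)) +
        ∫ θ in a..τ, (Mu₀ θ - u₀ θ) * ((d - 1 : ℝ) * Real.sin θ ^ (d - 2) * Real.cos θ) :=
  spherical_integration_by_parts_estimate_general d hd a τ b ha haτ hτb hb ustar u₀ Mu₀ hu₀Lip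
    hustarLip hMLip hle₁ hle₂ hba hbb hmono₁ hmono₂
end
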